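/- arXiv:1404.6356 — 2 statements merged into one kernel-verified Lean document; each statement's English description precedes it below -/
import Mathlib

section
/- Let g, t, t0, t1, t0', t1' be nonnegative integers with t0 + t1 ≤ t and t0' + t1' ≤ t − 1. Assume that if g = 0 and t ≤ 2, then t0 + t1 < t. If t ≥ 2, t0' ≤ t0, t1' ≤ t1 and t0' + t1' ≥ t0 + t1 − 2, then surf(g, t−1, t0', t1') ≤ surf(g, t, t0, t1) − 1. -/
/-- gen(g,t,t0,t1) = 120g + 48t − 4t1 − 5t0 − 120. -/
def gen (g t t0 t1 : ℕ) : ℤ :=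
  120 * g + 48 * t - 4 * t1 - 5 * t0 - 120

/-- The function surf from the paper. -/
def surf (g t t0 t1 : ℕ) : ℤ :=
  if g = 0 ∧ t = 2 ∧ t0 + t1 = 2 then 8 - 4 * t1 - 5 * t0
  else if g = 0 ∧ t ≤ 2 ∧ t0 + t1 < 2 then 6 * t - 4 * t1 - 5 * t0 - 6
  else gen g t t0 t1

theorem stmt0 (g t t0 t1 t0' t1' : ℕ)
    (ht : t0 + t1 ≤ t) (ht' : t0' + t1' ≤ t - 1)
    (hcond : g = 0 → t ≤ 2 → t0 + t1 < t)
    (h2 : 2 ≤ t) (h5 : t0' ≤ t0) (h6 : t1' ≤ t1)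
    (h7 : t0 + t1 ≤ t0' + t1' + 2) :
    surf g (t - 1) t0' t1' ≤ surf g t t0 t1 - 1 := by
  unfold surf gen
  split_ifs <;> push_cast <;> omega
end

section
/- Let g, g', g'', t, t', t'', t0, t0', t0'', t1, t1', t1'' be nonnegative integers satisfying g = g' + g'', t = t' + t'', t0 = t0' + t0'', t1 = t1' + t1'', with t0' + t1' ≤ t' and t0'' + t1'' ≤ t''. Assume that either g'' > 0 or t'' ≥ 1, and that either g' > 0 or t' ≥ 2. Then surf(g', t', t0', t1') + surf(g'', t'', t0'', t1'') ≤ surf(g, t, t0, t1) − δ, where δ = 16 if g'' = 0 and t'' = 1, and δ = 56 otherwise. -/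
theorem stmt2 (g g' g'' t t' t'' t0 t0' t0'' t1 t1' t1'' : ℕ)
    (hg : g = g' + g'') (ht : t = t' + t'')
    (ht0 : t0 = t0' + t0'') (ht1 : t1 = t1' + t1'')
    (hb' : t0' + t1' ≤ t') (hb'' : t0'' + t1'' ≤ t'')
    (h1 : 0 < g'' ∨ 1 ≤ t'') (h2 : 0 < g' ∨ 2 ≤ t') :
    surf g' t' t0' t1' + surf g'' t'' t0'' t1'' ≤
      surf g t t0 t1 - (if g'' = 0 ∧ t'' = 1 then 16 else 56) := by
  simp only [surf, gen]
  split_ifs <;> push_cast <;> omega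
end
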